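/- For any defeasible theory D and its meta-program translation M: D ⊢ +Δp iff M ⊨_K definitely(p), and D ⊢ -Δp iff M ⊨_K ¬definitely(p), where ⊨_K is support under the Kunen (3-valued) semantics. -/

import Mathlib

/-! Core: propositional Defeasible Logic (proof theory via derivations) -/

/-- Literals: positive or negative atoms. -/
inductive Lit : Type
  | pos : ℕ → Lit
  | neg : ℕ → Lit
deriving DecidableEq, Repr

/-- The complement `~q` of a literal. -/
def Lit.compl : Lit → Lit
  | .pos n => .neg n
  | .neg n => .pos n

/-- The three kinds of rules in a defeasible theory. -/
inductive RuleKind : Type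
  | strict | defeasible | defeater
deriving DecidableEq, Repr

/-- A rule with a unique label (name), kind, antecedent and literal head. -/
structure DLRule : Type where
  name : ℕ
  kind : RuleKind
  ante : List Lit
  head : Lit
deriving DecidableEq, Repr

/-- A (finite, propositional) defeasible theory `D = (F, R, >)`. -/
structure DTheory : Type where
  facts : Finset Lit
  rules : Finset DLRule
  sup : DLRule → DLRule → Prop

/-- The four proof tags `+Δ`, `-Δ`, `+∂`, `-∂`. -/
inductive Tag : Type
  | pDelta | mDelta | pPartial | mPartial
deriving DecidableEq, Repr

/-- A tagged literal (a conclusion). -/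
abbrev TaggedLit := Tag × Lit

/-- The inference conditions of Defeasible Logic: the tagged literal `c` may
be appended to a derivation whose earlier lines are `prev`. -/
def ValidLine (D : DTheory) (prev : List TaggedLit) : TaggedLit → Prop
  | (Tag.pDelta, q) =>
      q ∈ D.facts ∨
      ∃ r ∈ D.rules, r.kind = RuleKind.strict ∧ r.head = q ∧
        ∀ a ∈ r.ante, (Tag.pDelta, a) ∈ prev
  | (Tag.mDelta, q) =>
      q ∉ D.facts ∧
      ∀ r ∈ D.rules, r.kind = RuleKind.strict → r.head = q →
        ∃ a ∈ r.ante, (Tag.mDelta, a) ∈ prev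
  | (Tag.pPartial, q) =>
      (Tag.pDelta, q) ∈ prev ∨
      ((∃ r ∈ D.rules, r.kind ≠ RuleKind.defeater ∧ r.head = q ∧
          ∀ a ∈ r.ante, (Tag.pPartial, a) ∈ prev) ∧
       (Tag.mDelta, q.compl) ∈ prev ∧
       ∀ s ∈ D.rules, s.head = q.compl →
         (∃ a ∈ s.ante, (Tag.mPartial, a) ∈ prev) ∨
         (∃ t ∈ D.rules, t.kind ≠ RuleKind.defeater ∧ t.head = q ∧
           (∀ a ∈ t.ante, (Tag.pPartial, a) ∈ prev) ∧ D.sup t s))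
  | (Tag.mPartial, q) =>
      (Tag.mDelta, q) ∈ prev ∧
      ((∀ r ∈ D.rules, r.kind ≠ RuleKind.defeater → r.head = q →
          ∃ a ∈ r.ante, (Tag.mPartial, a) ∈ prev) ∨
       (Tag.pDelta, q.compl) ∈ prev ∨
       (∃ s ∈ D.rules, s.head = q.compl ∧
          (∀ a ∈ s.ante, (Tag.pPartial, a) ∈ prev) ∧
          ∀ t ∈ D.rules, t.kind ≠ RuleKind.defeater → t.head = q →
            (∃ a ∈ t.ante, (Tag.mPartial, a) ∈ prev) ∨ ¬ D.sup t s))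

/-- `P` is a derivation in `D`: a finite sequence of tagged literals each of
which satisfies the inference conditions w.r.t. the earlier lines. -/
def IsDerivation (D : DTheory) (P : List TaggedLit) : Prop :=
  ∀ (i : ℕ) (h : i < P.length), ValidLine D (P.take i) (P.get ⟨i, h⟩)

/-- `D ⊢ (t, q)` : the tagged literal is a line of some derivation in `D`. -/
def Proves (D : DTheory) (t : Tag) (q : Lit) : Prop :=
  ∃ P : List TaggedLit, IsDerivation D P ∧ (t, q) ∈ P

/-- `D ⊢ +Δ q`. -/
abbrev PDelta (D : DTheory) (q : Lit) : Prop := Proves D Tag.pDelta q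
/-- `D ⊢ -Δ q`. -/
abbrev MDelta (D : DTheory) (q : Lit) : Prop := Proves D Tag.mDelta q
/-- `D ⊢ +∂ q`. -/
abbrev PPartial (D : DTheory) (q : Lit) : Prop := Proves D Tag.pPartial q
/-- `D ⊢ -∂ q`. -/
abbrev MPartial (D : DTheory) (q : Lit) : Prop := Proves D Tag.mPartial q

/-- `q` is strictly unknowable in `D`. -/
def StrictlyUnknowable (D : DTheory) (q : Lit) : Prop := ¬ PDelta D q ∧ ¬ MDelta D q

/-- `q` is defeasibly unknowable in `D`. -/
def DefeasiblyUnknowable (D : DTheory) (q : Lit) : Prop := ¬ PPartial D q ∧ ¬ MPartial D q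

/-- `q` is unknowable in `D`. -/
def Unknowable (D : DTheory) (q : Lit) : Prop :=
  StrictlyUnknowable D q ∨ DefeasiblyUnknowable D q

/-- The point `{q, ~q}` of the dependency graph corresponding to a literal `q`. -/
def Lit.pt (q : Lit) : Set Lit := {q, q.compl}

/-- Arc of the dependency graph `DG(D)` from point `{b,~b}` to point `{a,~a}`:
there is a strict or defeasible rule whose head is in `{b,~b}` and some antecedent
in `{a,~a}`.  (Stated on representative literals; it is complement-invariant.) -/
def DepArc (D : DTheory) (b a : Lit) : Prop :=
  ∃ r ∈ D.rules, r.kind ≠ RuleKind.defeater ∧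
    (r.head = b ∨ r.head = b.compl) ∧ (a ∈ r.ante ∨ a.compl ∈ r.ante)

/-- `D` is decisive iff its dependency graph is acyclic. -/
def Decisive (D : DTheory) : Prop := ∀ q : Lit, ¬ Relation.TransGen (DepArc D) q q

/-! Core: atoms of the meta-language of the logic-programming translation -/

/-- Ground atoms of the meta-program: `fact`, `strict`, `defeasible`, `defeater`,
`sup`, `definitely`, `defeasibly`, `overruled`, `defeated`, `supportive_rule`, `rule`. -/
inductive MAtom : Type
  | fact : Lit → MAtom
  | strict : ℕ → Lit → List Lit → MAtom
  | defeasible : ℕ → Lit → List Lit → MAtom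
  | defeater : ℕ → Lit → List Lit → MAtom
  | sup : ℕ → ℕ → MAtom
  | definitely : Lit → MAtom
  | defeasibly : Lit → MAtom
  | overruled : ℕ → Lit → MAtom
  | defeated : ℕ → Lit → MAtom
  | supportive_rule : ℕ → Lit → List Lit → MAtom
  | rule : ℕ → Lit → List Lit → MAtom
deriving DecidableEq

/-! Core: logic programs, Gelfond–Lifschitz reduct, stable models -/

/-- A program clause `head ← pos₁,…,posₙ, not neg₁,…, not negₘ` over atoms `α`. -/
structure LPClause (α : Type) : Type where
  head : α
  pos : List α
  neg : List α

/-- The least Herbrand model of a definite program (given as head/body pairs). -/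
def leastModel {α : Type} (Q : Set (α × List α)) : Set α :=
  ⋂₀ {I : Set α | ∀ c ∈ Q, (∀ b ∈ c.2, b ∈ I) → c.1 ∈ I}

/-- The Gelfond–Lifschitz reduct `P^M`. -/
def reduct {α : Type} (P : Set (LPClause α)) (M : Set α) : Set (α × List α) :=
  {c | ∃ cl ∈ P, (∀ a ∈ cl.neg, a ∉ M) ∧ c = (cl.head, cl.pos)}

/-- `M` is a stable model of `P` iff it is the least Herbrand model of `P^M`. -/
def IsStableModel {α : Type} (P : Set (LPClause α)) (M : Set α) : Prop :=
  M = leastModel (reduct P M)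

/-! Core: the meta-program `M(D)` translating a defeasible theory into a logic program -/

/-- The meta-program `M` for a defeasible theory `D`: the meta-clauses for
`definitely`, `defeasibly`, `overruled`, `defeated`, `supportive_rule`, `rule`
(ground instances) together with the facts encoding `D`. -/
def metaProgram (D : DTheory) : Set (LPClause MAtom) :=
  {c |
    -- facts encoding D
    (∃ p ∈ D.facts, c = ⟨.fact p, [], []⟩) ∨
    (∃ r ∈ D.rules, r.kind = RuleKind.strict ∧
       c = ⟨.strict r.name r.head r.ante, [], []⟩) ∨
    (∃ r ∈ D.rules, r.kind = RuleKind.defeasible ∧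
       c = ⟨.defeasible r.name r.head r.ante, [], []⟩) ∨
    (∃ r ∈ D.rules, r.kind = RuleKind.defeater ∧
       c = ⟨.defeater r.name r.head r.ante, [], []⟩) ∨
    (∃ r ∈ D.rules, ∃ s ∈ D.rules, D.sup r s ∧ c = ⟨.sup r.name s.name, [], []⟩) ∨
    -- supportive_rule and rule
    (∃ (N : ℕ) (H : Lit) (B : List Lit),
       c = ⟨.supportive_rule N H B, [.strict N H B], []⟩) ∨
    (∃ (N : ℕ) (H : Lit) (B : List Lit),
       c = ⟨.supportive_rule N H B, [.defeasible N H B], []⟩) ∨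
    (∃ (N : ℕ) (H : Lit) (B : List Lit),
       c = ⟨.rule N H B, [.supportive_rule N H B], []⟩) ∨
    (∃ (N : ℕ) (H : Lit) (B : List Lit),
       c = ⟨.rule N H B, [.defeater N H B], []⟩) ∨
    -- definitely
    (∃ X : Lit, c = ⟨.definitely X, [.fact X], []⟩) ∨
    (∃ (R : ℕ) (X : Lit) (Ys : List Lit),
       c = ⟨.definitely X, .strict R X Ys :: Ys.map .definitely, []⟩) ∨
    -- defeasibly
    (∃ X : Lit, c = ⟨.defeasibly X, [.definitely X], []⟩) ∨
    (∃ (R : ℕ) (X : Lit) (Ys : List Lit),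
       c = ⟨.defeasibly X, .supportive_rule R X Ys :: Ys.map .defeasibly,
            [.definitely X.compl, .overruled R X]⟩) ∨
    -- overruled
    (∃ (R S : ℕ) (X : Lit) (Us : List Lit),
       c = ⟨.overruled R X, .rule S X.compl Us :: Us.map .defeasibly,
            [.defeated S X.compl]⟩) ∨
    -- defeated
    (∃ (S T : ℕ) (X : Lit) (Vs : List Lit),
       c = ⟨.defeated S X.compl, .sup T S :: .supportive_rule T X Vs ::
            Vs.map .defeasibly, []⟩)}

/-! Core: Kunen (3-valued) semantics of logic programs -/

/-- Kleene 3-valued truth of a clause body: all positive atoms true and all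
negated atoms false. -/
def bodyTrue {α : Type} (I : α → Option Bool) (c : LPClause α) : Prop :=
  (∀ a ∈ c.pos, I a = some true) ∧ ∀ a ∈ c.neg, I a = some false

/-- Kleene 3-valued falsity of a clause body. -/
def bodyFalse {α : Type} (I : α → Option Bool) (c : LPClause α) : Prop :=
  (∃ a ∈ c.pos, I a = some false) ∨ ∃ a ∈ c.neg, I a = some true

open Classical in
/-- One step of the Kunen iteration. -/
noncomputable def kunenStep {α : Type} (P : Set (LPClause α)) (I : α → Option Bool) :
    α → Option Bool := fun a =>
  if ∃ c ∈ P, c.head = a ∧ bodyTrue I c then some true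
  else if ∀ c ∈ P, c.head = a → bodyFalse I c then some false
  else none

/-- The Kunen sequence `{Iₙ}`, starting from the everywhere-unknown interpretation. -/
noncomputable def kunenSeq {α : Type} (P : Set (LPClause α)) : ℕ → α → Option Bool
  | 0 => fun _ => none
  | n + 1 => kunenStep P (kunenSeq P n)

/-- `P ⊨_K a` for an atom `a`. -/
def kunenSupports {α : Type} (P : Set (LPClause α)) (a : α) : Prop :=
  ∃ n : ℕ, kunenSeq P n a = some true

/-- `P ⊨_K ¬a` for an atom `a`. -/
def kunenSupportsNot {α : Type} (P : Set (LPClause α)) (a : α) : Prop :=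
  ∃ n : ℕ, kunenSeq P n a = some false
/-! ### Auxiliary development -/

section Aux

variable {D : DTheory} {p : Lit}

/-- Iterated definite provability. -/
def PDn (D : DTheory) : ℕ → Lit → Prop
  | 0, _ => False
  | n+1, p => p ∈ D.facts ∨ ∃ r ∈ D.rules, r.kind = RuleKind.strict ∧ r.head = p ∧
      ∀ a ∈ r.ante, PDn D n a

/-- Iterated definite refutability. -/
def MDn (D : DTheory) : ℕ → Lit → Prop
  | 0, _ => False
  | n+1, p => p ∉ D.facts ∧ ∀ r ∈ D.rules, r.kind = RuleKind.strict → r.head = p →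
      ∃ a ∈ r.ante, MDn D n a

lemma PDn_succ : ∀ n (p : Lit), PDn D n p → PDn D (n+1) p := by
  intro n
  induction n with
  | zero => intro p h; exact h.elim
  | succ n ih =>
    intro p h
    rcases h with h | ⟨r, hr, hk, hh, ha⟩
    · exact Or.inl h
    · exact Or.inr ⟨r, hr, hk, hh, fun a ha' => ih a (ha a ha')⟩

lemma MDn_succ : ∀ n (p : Lit), MDn D n p → MDn D (n+1) p := by
  intro n
  induction n with
  | zero => intro p h; exact h.elim
  | succ n ih =>
    rintro p ⟨hnf, hr⟩
    refine ⟨hnf, fun r hrr hk hh => ?_⟩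
    obtain ⟨a, ha, hm⟩ := hr r hrr hk hh
    exact ⟨a, ha, ih a hm⟩

lemma PDn_le {m n} (h : m ≤ n) {p : Lit} : PDn D m p → PDn D n p := by
  induction h with
  | refl => exact id
  | step _ ih => exact fun hp => PDn_succ _ _ (ih hp)

lemma MDn_le {m n} (h : m ≤ n) {p : Lit} : MDn D m p → MDn D n p := by
  induction h with
  | refl => exact id
  | step _ ih => exact fun hp => MDn_succ _ _ (ih hp)

lemma list_level {β : Type*} {l : List β} {R : β → ℕ → Prop}
    (mono : ∀ a m n, m ≤ n → R a m → R a n)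
    (h : ∀ a ∈ l, ∃ N, R a N) : ∃ N, ∀ a ∈ l, R a N := by
  induction l with
  | nil => exact ⟨0, by simp⟩
  | cons a l ih =>
    obtain ⟨N, hN⟩ := ih (fun b hb => h b (List.mem_cons_of_mem _ hb))
    obtain ⟨M, hM⟩ := h a List.mem_cons_self
    refine ⟨max N M, fun b hb => ?_⟩
    rcases List.mem_cons.1 hb with rfl | hb
    · exact mono _ _ _ (le_max_right _ _) hM
    · exact mono _ _ _ (le_max_left _ _) (hN b hb)

lemma finset_level {β : Type*} {s : Finset β} {R : β → ℕ → Prop}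
    (mono : ∀ a m n, m ≤ n → R a m → R a n)
    (h : ∀ a ∈ s, ∃ N, R a N) : ∃ N, ∀ a ∈ s, R a N := by
  classical
  induction s using Finset.induction_on with
  | empty => exact ⟨0, by simp⟩
  | @insert a s hni ih =>
    obtain ⟨N, hN⟩ := ih (fun b hb => h b (Finset.mem_insert_of_mem hb))
    obtain ⟨M, hM⟩ := h a (Finset.mem_insert_self _ _)
    refine ⟨max N M, fun b hb => ?_⟩
    rcases Finset.mem_insert.1 hb with rfl | hb
    · exact mono _ _ _ (le_max_right _ _) hM
    · exact mono _ _ _ (le_max_left _ _) (hN b hb)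

end Aux
section Deriv

variable {D : DTheory} {p q : Lit}

lemma valid_delta_mono {prev prev' : List TaggedLit} (c : TaggedLit)
    (ht : c.1 = Tag.pDelta ∨ c.1 = Tag.mDelta)
    (hsub : ∀ x ∈ prev, x ∈ prev') (h : ValidLine D prev c) :
    ValidLine D prev' c := by
  obtain ⟨t, q⟩ := c
  simp only at ht
  rcases ht with rfl | rfl
  · simp only [ValidLine] at h ⊢
    rcases h with h | ⟨r, hr, hk, hh, ha⟩
    · exact Or.inl h
    · exact Or.inr ⟨r, hr, hk, hh, fun a ha' => hsub _ (ha a ha')⟩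
  · simp only [ValidLine] at h ⊢
    refine ⟨h.1, fun r hr hk hh => ?_⟩
    obtain ⟨a, ha, hm⟩ := h.2 r hr hk hh
    exact ⟨a, ha, hsub _ hm⟩

/-- Derivations consisting only of `±Δ` lines. -/
def DeltaOnly (P : List TaggedLit) : Prop :=
  ∀ c ∈ P, c.1 = Tag.pDelta ∨ c.1 = Tag.mDelta

lemma isDerivation_nil : IsDerivation D [] := by
  intro i hi
  exact absurd hi (by simp)

lemma isDerivation_append {P Q : List TaggedLit} (hP : IsDerivation D P)
    (hQ : IsDerivation D Q) (hQt : DeltaOnly Q) : IsDerivation D (P ++ Q) := by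
  intro i h
  simp only [List.get_eq_getElem]
  rcases lt_or_ge i P.length with hi | hi
  · rw [List.getElem_append_left hi, List.take_append_of_le_length hi.le]
    simpa using hP i hi
  · have hlen : i - P.length < Q.length := by
      have := h; simp only [List.length_append] at this; omega
    rw [List.getElem_append_right hi]
    have htake : (P ++ Q).take i = P ++ Q.take (i - P.length) := by
      conv_lhs => rw [show i = P.length + (i - P.length) by omega]
      rw [List.take_append, List.take_of_length_le (Nat.le_add_right _ _), Nat.add_sub_cancel_left]
    rw [htake]
    have hv := hQ (i - P.length) hlen
    simp only [List.get_eq_getElem] at hv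
    exact valid_delta_mono _ (hQt _ (List.getElem_mem hlen))
      (fun x hx => List.mem_append.2 (Or.inr hx)) hv

lemma isDerivation_snoc {P : List TaggedLit} {c : TaggedLit}
    (hP : IsDerivation D P) (hc : ValidLine D P c) :
    IsDerivation D (P ++ [c]) := by
  intro i h
  simp only [List.get_eq_getElem]
  have hlen : i < P.length + 1 := by simpa using h
  rcases lt_or_ge i P.length with hi | hi
  · rw [List.getElem_append_left hi, List.take_append_of_le_length hi.le]
    simpa using hP i hi
  · have hi' : i = P.length := by omega
    subst hi'
    rw [List.getElem_append_right le_rfl]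
    simp only [Nat.sub_self, List.getElem_cons_zero]
    rw [List.take_left]
    exact hc

lemma mem_take_getElem {l : List TaggedLit} {i : ℕ} {x : TaggedLit} (h : x ∈ l.take i) :
    ∃ j, ∃ hj : j < l.length, j < i ∧ l[j] = x := by
  obtain ⟨j, hj, hx⟩ := List.getElem_of_mem h
  have hj2 : j < min i l.length := by simpa [List.length_take] using hj
  have hjl : j < l.length := lt_of_lt_of_le hj2 (min_le_right _ _)
  have hji : j < i := lt_of_lt_of_le hj2 (min_le_left _ _)
  refine ⟨j, hjl, hji, ?_⟩
  rw [← hx, List.getElem_take]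

lemma combine_list {t : Tag} (ht : t = Tag.pDelta ∨ t = Tag.mDelta) {l : List Lit}
    (h : ∀ a ∈ l, ∃ P, IsDerivation D P ∧ (t, a) ∈ P ∧ ∀ c ∈ P, c.1 = t) :
    ∃ P, IsDerivation D P ∧ (∀ a ∈ l, (t, a) ∈ P) ∧ ∀ c ∈ P, c.1 = t := by
  induction l with
  | nil => exact ⟨[], isDerivation_nil, by simp, by simp⟩
  | cons a l ihl =>
    obtain ⟨P, hP, hmem, htag⟩ := ihl (fun b hb => h b (List.mem_cons_of_mem _ hb))
    obtain ⟨Q, hQ, hq, hqt⟩ := h a List.mem_cons_self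
    have hQt' : DeltaOnly Q := by
      intro c hc
      rcases ht with rfl | rfl
      · exact Or.inl (hqt c hc)
      · exact Or.inr (hqt c hc)
    refine ⟨P ++ Q, isDerivation_append hP hQ hQt', ?_, ?_⟩
    · intro b hb
      rcases List.mem_cons.1 hb with rfl | hb
      · exact List.mem_append.2 (Or.inr hq)
      · exact List.mem_append.2 (Or.inl (hmem b hb))
    · intro c hc
      rcases List.mem_append.1 hc with hc | hc
      · exact htag c hc
      · exact hqt c hc

lemma combine_finset {β : Type*} {t : Tag} (ht : t = Tag.pDelta ∨ t = Tag.mDelta)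
    {s : Finset β} {C : β → List TaggedLit → Prop}
    (hmono : ∀ r P P', (∀ x ∈ P, x ∈ P') → C r P → C r P')
    (h : ∀ r ∈ s, ∃ P, IsDerivation D P ∧ C r P ∧ ∀ c ∈ P, c.1 = t) :
    ∃ P, IsDerivation D P ∧ (∀ r ∈ s, C r P) ∧ ∀ c ∈ P, c.1 = t := by
  classical
  induction s using Finset.induction_on with
  | empty => exact ⟨[], isDerivation_nil, by simp, by simp⟩
  | @insert a s hni ih =>
    obtain ⟨P, hP, hC, htag⟩ := ih (fun r hr => h r (Finset.mem_insert_of_mem hr))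
    obtain ⟨Q, hQ, hq, hqt⟩ := h _ (Finset.mem_insert_self _ _)
    have hQt' : DeltaOnly Q := by
      intro c hc
      rcases ht with rfl | rfl
      · exact Or.inl (hqt c hc)
      · exact Or.inr (hqt c hc)
    refine ⟨P ++ Q, isDerivation_append hP hQ hQt', ?_, ?_⟩
    · intro r hr
      rcases Finset.mem_insert.1 hr with rfl | hr
      · exact hmono _ _ _ (fun x hx => List.mem_append.2 (Or.inr hx)) hq
      · exact hmono _ _ _ (fun x hx => List.mem_append.2 (Or.inl hx)) (hC r hr)
    · intro c hc
      rcases List.mem_append.1 hc with hc | hc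
      · exact htag c hc
      · exact hqt c hc

lemma pdn_proves : ∀ n (p : Lit), PDn D n p →
    ∃ P, IsDerivation D P ∧ (Tag.pDelta, p) ∈ P ∧ ∀ c ∈ P, c.1 = Tag.pDelta := by
  intro n
  induction n with
  | zero => intro p h; exact h.elim
  | succ n ih =>
    intro p h
    have snoc_case : ∀ P, IsDerivation D P → (∀ c ∈ P, c.1 = Tag.pDelta) →
        ValidLine D P (Tag.pDelta, p) →
        ∃ P', IsDerivation D P' ∧ (Tag.pDelta, p) ∈ P' ∧ ∀ c ∈ P', c.1 = Tag.pDelta := by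
      intro P hP htag hv
      refine ⟨P ++ [(Tag.pDelta, p)], isDerivation_snoc hP hv, List.mem_append.2 (Or.inr (by simp)), ?_⟩
      intro c hc
      rcases List.mem_append.1 hc with hc | hc
      · exact htag c hc
      · simp at hc; subst hc; rfl
    rcases h with hp | ⟨r, hr, hk, hh, ha⟩
    · refine snoc_case [] isDerivation_nil (by simp) ?_
      exact Or.inl hp
    · obtain ⟨P, hP, hmem, htag⟩ := combine_list (l := r.ante) (Or.inl rfl) (fun a ha' => ih a (ha a ha'))
      refine snoc_case P hP htag ?_
      exact Or.inr ⟨r, hr, hk, hh, fun a ha' => hmem a ha'⟩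

lemma mdn_proves : ∀ n (p : Lit), MDn D n p →
    ∃ P, IsDerivation D P ∧ (Tag.mDelta, p) ∈ P ∧ ∀ c ∈ P, c.1 = Tag.mDelta := by
  intro n
  induction n with
  | zero => intro p h; exact h.elim
  | succ n ih =>
    rintro p ⟨hnf, hr⟩
    have h : ∀ r ∈ D.rules, ∃ P, IsDerivation D P ∧
        (r.kind = RuleKind.strict → r.head = p → ∃ a ∈ r.ante, (Tag.mDelta, a) ∈ P) ∧
        ∀ c ∈ P, c.1 = Tag.mDelta := by
      intro r hrr
      by_cases hks : r.kind = RuleKind.strict ∧ r.head = p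
      · obtain ⟨a, ha, hm⟩ := hr r hrr hks.1 hks.2
        obtain ⟨P, hP, hmem, htag⟩ := ih a hm
        exact ⟨P, hP, fun _ _ => ⟨a, ha, hmem⟩, htag⟩
      · exact ⟨[], isDerivation_nil, fun h1 h2 => absurd ⟨h1, h2⟩ hks, by simp⟩
    obtain ⟨P, hP, hC, htag⟩ := combine_finset (Or.inr rfl)
      (fun r P P' hsub hc h1 h2 => (hc h1 h2).imp fun a ⟨ha, hm⟩ => ⟨ha, hsub _ hm⟩) h
    refine ⟨P ++ [(Tag.mDelta, p)], isDerivation_snoc hP ⟨hnf, fun r hrr hk hh => hC r hrr hk hh⟩,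
      List.mem_append.2 (Or.inr (by simp)), ?_⟩
    intro c hc
    rcases List.mem_append.1 hc with hc | hc
    · exact htag c hc
    · simp at hc; subst hc; rfl

lemma deriv_sound {P : List TaggedLit} (hP : IsDerivation D P) :
    ∀ i, ∀ hi : i < P.length,
      (∀ q : Lit, P[i] = (Tag.pDelta, q) → ∃ n, PDn D n q) ∧
      (∀ q : Lit, P[i] = (Tag.mDelta, q) → ∃ n, MDn D n q) := by
  intro i
  induction i using Nat.strong_induction_on with
  | _ i IH =>
    intro hi
    have hv := hP i hi
    simp only [List.get_eq_getElem] at hv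
    constructor
    · intro q hq
      rw [hq] at hv
      simp only [ValidLine] at hv
      rcases hv with h | ⟨r, hr, hk, hh, ha⟩
      · exact ⟨1, Or.inl h⟩
      · have hants : ∀ a ∈ r.ante, ∃ n, PDn D n a := by
          intro a ha'
          obtain ⟨j, hj, hji, hx⟩ := mem_take_getElem (ha a ha')
          exact ((IH j hji hj).1) a hx
        obtain ⟨N, hN⟩ := list_level (R := fun a n => PDn D n a) (fun a m n hmn => PDn_le hmn) hants
        exact ⟨N + 1, Or.inr ⟨r, hr, hk, hh, hN⟩⟩
    · intro q hq
      rw [hq] at hv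
      simp only [ValidLine] at hv
      obtain ⟨hnf, hr⟩ := hv
      have hrules : ∀ r ∈ D.rules, ∃ N,
          (r.kind = RuleKind.strict → r.head = q → ∃ a ∈ r.ante, MDn D N a) := by
        intro r hrr
        by_cases hks : r.kind = RuleKind.strict ∧ r.head = q
        · obtain ⟨a, ha, hm⟩ := hr r hrr hks.1 hks.2
          obtain ⟨j, hj, hji, hx⟩ := mem_take_getElem hm
          obtain ⟨n, hn⟩ := ((IH j hji hj).2) a hx
          exact ⟨n, fun _ _ => ⟨a, ha, hn⟩⟩
        · exact ⟨0, fun h1 h2 => absurd ⟨h1, h2⟩ hks⟩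
      have mono : ∀ (r : DLRule) (m n : ℕ), m ≤ n →
          (r.kind = RuleKind.strict → r.head = q → ∃ a ∈ r.ante, MDn D m a) →
          (r.kind = RuleKind.strict → r.head = q → ∃ a ∈ r.ante, MDn D n a) := by
        intro r m n hmn hv' h1 h2
        obtain ⟨a, ha, hm⟩ := hv' h1 h2
        exact ⟨a, ha, MDn_le hmn hm⟩
      obtain ⟨N, hN⟩ := finset_level mono hrules
      exact ⟨N + 1, hnf, fun r hrr hk hh => hN r hrr hk hh⟩

lemma pdelta_iff_pdn : PDelta D p ↔ ∃ n, PDn D n p := by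
  constructor
  · rintro ⟨P, hP, hm⟩
    obtain ⟨i, hi, hx⟩ := List.getElem_of_mem hm
    exact (deriv_sound hP i hi).1 p hx
  · rintro ⟨n, hn⟩
    obtain ⟨P, hP, hm, -⟩ := pdn_proves n p hn
    exact ⟨P, hP, hm⟩

lemma mdelta_iff_mdn : MDelta D p ↔ ∃ n, MDn D n p := by
  constructor
  · rintro ⟨P, hP, hm⟩
    obtain ⟨i, hi, hx⟩ := List.getElem_of_mem hm
    exact (deriv_sound hP i hi).2 p hx
  · rintro ⟨n, hn⟩
    obtain ⟨P, hP, hm, -⟩ := mdn_proves n p hn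
    exact ⟨P, hP, hm⟩

end Deriv
section Kunen

variable {α : Type} {D : DTheory} {p : Lit}

/-- Information order on 3-valued interpretations. -/
def InfoLE (I J : α → Option Bool) : Prop := ∀ a b, I a = some b → J a = some b

lemma bodyTrue_mono {I J : α → Option Bool} (h : InfoLE I J) {c : LPClause α}
    (hc : bodyTrue I c) : bodyTrue J c :=
  ⟨fun a ha => h a true (hc.1 a ha), fun a ha => h a false (hc.2 a ha)⟩

lemma bodyFalse_mono {I J : α → Option Bool} (h : InfoLE I J) {c : LPClause α}
    (hc : bodyFalse I c) : bodyFalse J c := by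
  rcases hc with ⟨a, ha, hv⟩ | ⟨a, ha, hv⟩
  · exact Or.inl ⟨a, ha, h a false hv⟩
  · exact Or.inr ⟨a, ha, h a true hv⟩

lemma bodyTrue_not_false {I : α → Option Bool} {c : LPClause α}
    (h1 : bodyTrue I c) (h2 : bodyFalse I c) : False := by
  rcases h2 with ⟨a, ha, hv⟩ | ⟨a, ha, hv⟩
  · rw [h1.1 a ha] at hv; simp at hv
  · rw [h1.2 a ha] at hv; simp at hv

lemma kunenStep_true {P : Set (LPClause α)} {I : α → Option Bool} {a : α}
    (h : ∃ c ∈ P, c.head = a ∧ bodyTrue I c) : kunenStep P I a = some true := by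
  unfold kunenStep
  rw [if_pos h]

lemma kunenStep_false {P : Set (LPClause α)} {I : α → Option Bool} {a : α}
    (h : ∀ c ∈ P, c.head = a → bodyFalse I c) : kunenStep P I a = some false := by
  have hn : ¬ ∃ c ∈ P, c.head = a ∧ bodyTrue I c := by
    rintro ⟨c, hc, hh, hb⟩
    exact bodyTrue_not_false hb (h c hc hh)
  unfold kunenStep
  rw [if_neg hn, if_pos h]

lemma kunenStep_true_elim {P : Set (LPClause α)} {I : α → Option Bool} {a : α}
    (h : kunenStep P I a = some true) : ∃ c ∈ P, c.head = a ∧ bodyTrue I c := by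
  by_contra hn
  unfold kunenStep at h
  rw [if_neg hn] at h
  split at h <;> simp at h

lemma kunenStep_false_elim {P : Set (LPClause α)} {I : α → Option Bool} {a : α}
    (h : kunenStep P I a = some false) : ∀ c ∈ P, c.head = a → bodyFalse I c := by
  unfold kunenStep at h
  split at h
  · simp at h
  · split at h
    · assumption
    · simp at h

lemma kunenStep_mono {P : Set (LPClause α)} {I J : α → Option Bool} (h : InfoLE I J) :
    InfoLE (kunenStep P I) (kunenStep P J) := by
  intro a b hb
  cases b
  · exact kunenStep_false (fun c hc hh => bodyFalse_mono h (kunenStep_false_elim hb c hc hh))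
  · obtain ⟨c, hc, hh, hb'⟩ := kunenStep_true_elim hb
    exact kunenStep_true ⟨c, hc, hh, bodyTrue_mono h hb'⟩

lemma kunenSeq_succ (P : Set (LPClause α)) (n : ℕ) :
    kunenSeq P (n+1) = kunenStep P (kunenSeq P n) := rfl

lemma kunenSeq_succ_mono (P : Set (LPClause α)) :
    ∀ n, InfoLE (kunenSeq P n) (kunenSeq P (n+1))
  | 0 => fun a b hb => by simp [kunenSeq] at hb
  | n+1 => kunenStep_mono (kunenSeq_succ_mono P n)

lemma kunenSeq_le {P : Set (LPClause α)} {m n : ℕ} (h : m ≤ n) :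
    InfoLE (kunenSeq P m) (kunenSeq P n) := by
  induction h with
  | refl => exact fun a b => id
  | step _ ih => exact fun a b hb => kunenSeq_succ_mono P _ a b (ih a b hb)

/-! Clause classification -/

lemma mem_metaProgram_fact {c : LPClause MAtom} (hc : c ∈ metaProgram D)
    (hh : c.head = MAtom.fact p) : p ∈ D.facts ∧ c = ⟨MAtom.fact p, [], []⟩ := by
  simp only [metaProgram, Set.mem_setOf_eq] at hc
  rcases hc with ⟨q, hq, rfl⟩ | ⟨r, hr, hk, rfl⟩ | ⟨r, hr, hk, rfl⟩ | ⟨r, hr, hk, rfl⟩ |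
    ⟨r, hr, s, hs, hsup, rfl⟩ | ⟨N, H, B, rfl⟩ | ⟨N, H, B, rfl⟩ | ⟨N, H, B, rfl⟩ |
    ⟨N, H, B, rfl⟩ | ⟨X, rfl⟩ | ⟨R, X, Ys, rfl⟩ | ⟨X, rfl⟩ | ⟨R, X, Ys, rfl⟩ |
    ⟨R, S, X, Us, rfl⟩ | ⟨S, T, X, Vs, rfl⟩ <;> simp_all

/-- Matching of a strict-rule atom against the theory. -/
def MatchStrict (D : DTheory) (R : ℕ) (X : Lit) (Ys : List Lit) : Prop :=
  ∃ r ∈ D.rules, r.kind = RuleKind.strict ∧ r.name = R ∧ r.head = X ∧ r.ante = Ys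

lemma mem_metaProgram_strict {c : LPClause MAtom} (hc : c ∈ metaProgram D)
    {R : ℕ} {X : Lit} {Ys : List Lit} (hh : c.head = MAtom.strict R X Ys) :
    MatchStrict D R X Ys ∧ c = ⟨MAtom.strict R X Ys, [], []⟩ := by
  simp only [metaProgram, Set.mem_setOf_eq] at hc
  rcases hc with ⟨q, hq, rfl⟩ | ⟨r, hr, hk, rfl⟩ | ⟨r, hr, hk, rfl⟩ | ⟨r, hr, hk, rfl⟩ |
    ⟨r, hr, s, hs, hsup, rfl⟩ | ⟨N, H, B, rfl⟩ | ⟨N, H, B, rfl⟩ | ⟨N, H, B, rfl⟩ |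
    ⟨N, H, B, rfl⟩ | ⟨X, rfl⟩ | ⟨R, X, Ys, rfl⟩ | ⟨X, rfl⟩ | ⟨R, X, Ys, rfl⟩ |
    ⟨R, S, X, Us, rfl⟩ | ⟨S, T, X, Vs, rfl⟩ <;> simp_all [MatchStrict]
  exact ⟨r, hr, hk, hh⟩

lemma mem_metaProgram_definitely {c : LPClause MAtom} (hc : c ∈ metaProgram D)
    (hh : c.head = MAtom.definitely p) :
    c = ⟨MAtom.definitely p, [MAtom.fact p], []⟩ ∨
    ∃ (R : ℕ) (Ys : List Lit),
      c = ⟨MAtom.definitely p, MAtom.strict R p Ys :: Ys.map MAtom.definitely, []⟩ := by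
  simp only [metaProgram, Set.mem_setOf_eq] at hc
  rcases hc with ⟨q, hq, rfl⟩ | ⟨r, hr, hk, rfl⟩ | ⟨r, hr, hk, rfl⟩ | ⟨r, hr, hk, rfl⟩ |
    ⟨r, hr, s, hs, hsup, rfl⟩ | ⟨N, H, B, rfl⟩ | ⟨N, H, B, rfl⟩ | ⟨N, H, B, rfl⟩ |
    ⟨N, H, B, rfl⟩ | ⟨X, rfl⟩ | ⟨R, X, Ys, rfl⟩ | ⟨X, rfl⟩ | ⟨R, X, Ys, rfl⟩ |
    ⟨R, S, X, Us, rfl⟩ | ⟨S, T, X, Vs, rfl⟩ <;> simp_all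

/-! Clause membership -/

lemma factClause_mem (hp : p ∈ D.facts) :
    (⟨MAtom.fact p, [], []⟩ : LPClause MAtom) ∈ metaProgram D := by
  simp only [metaProgram, Set.mem_setOf_eq]
  exact Or.inl ⟨p, hp, rfl⟩

lemma strictClause_mem {r : DLRule} (hr : r ∈ D.rules) (hk : r.kind = RuleKind.strict) :
    (⟨MAtom.strict r.name r.head r.ante, [], []⟩ : LPClause MAtom) ∈ metaProgram D := by
  simp only [metaProgram, Set.mem_setOf_eq]
  exact Or.inr (Or.inl ⟨r, hr, hk, rfl⟩)

lemma defFactClause_mem (X : Lit) :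
    (⟨MAtom.definitely X, [MAtom.fact X], []⟩ : LPClause MAtom) ∈ metaProgram D := by
  simp only [metaProgram, Set.mem_setOf_eq]
  exact Or.inr (Or.inr (Or.inr (Or.inr (Or.inr (Or.inr (Or.inr (Or.inr (Or.inr
    (Or.inl ⟨X, rfl⟩)))))))))

lemma defStrictClause_mem (R : ℕ) (X : Lit) (Ys : List Lit) :
    (⟨MAtom.definitely X, MAtom.strict R X Ys :: Ys.map MAtom.definitely, []⟩ :
      LPClause MAtom) ∈ metaProgram D := by
  simp only [metaProgram, Set.mem_setOf_eq]
  exact Or.inr (Or.inr (Or.inr (Or.inr (Or.inr (Or.inr (Or.inr (Or.inr (Or.inr (Or.inr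
    (Or.inl ⟨R, X, Ys, rfl⟩))))))))))

/-! Evaluation of the base atoms -/

lemma fact_eval (n : ℕ) :
    kunenSeq (metaProgram D) (n+1) (MAtom.fact p) =
      if p ∈ D.facts then some true else some false := by
  rw [kunenSeq_succ]
  split
  · exact kunenStep_true ⟨_, factClause_mem ‹_›, rfl, by simp [bodyTrue]⟩
  · apply kunenStep_false
    intro c hc hh
    exact absurd (mem_metaProgram_fact hc hh).1 ‹_›

lemma fact_true_sound {n : ℕ}
    (h : kunenSeq (metaProgram D) n (MAtom.fact p) = some true) : p ∈ D.facts := by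
  cases n with
  | zero => simp [kunenSeq] at h
  | succ n =>
    rw [fact_eval] at h
    by_contra hn
    rw [if_neg hn] at h
    simp at h

lemma fact_false_sound {n : ℕ}
    (h : kunenSeq (metaProgram D) n (MAtom.fact p) = some false) : p ∉ D.facts := by
  cases n with
  | zero => simp [kunenSeq] at h
  | succ n =>
    intro hp
    rw [fact_eval, if_pos hp] at h
    simp at h

lemma strict_eval_true {R : ℕ} {X : Lit} {Ys : List Lit} (h : MatchStrict D R X Ys) (n : ℕ) :
    kunenSeq (metaProgram D) (n+1) (MAtom.strict R X Ys) = some true := by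
  obtain ⟨r, hr, hk, hn, hh, ha⟩ := h
  subst hn hh ha
  rw [kunenSeq_succ]
  exact kunenStep_true ⟨_, strictClause_mem hr hk, rfl, by simp [bodyTrue]⟩

lemma strict_eval_false {R : ℕ} {X : Lit} {Ys : List Lit} (h : ¬ MatchStrict D R X Ys) (n : ℕ) :
    kunenSeq (metaProgram D) (n+1) (MAtom.strict R X Ys) = some false := by
  rw [kunenSeq_succ]
  apply kunenStep_false
  intro c hc hh
  exact absurd (mem_metaProgram_strict hc hh).1 h

lemma strict_true_sound {R : ℕ} {X : Lit} {Ys : List Lit} {n : ℕ}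
    (h : kunenSeq (metaProgram D) n (MAtom.strict R X Ys) = some true) :
    MatchStrict D R X Ys := by
  cases n with
  | zero => simp [kunenSeq] at h
  | succ n =>
    by_contra hn
    rw [strict_eval_false hn] at h
    simp at h

lemma strict_false_sound {R : ℕ} {X : Lit} {Ys : List Lit} {n : ℕ}
    (h : kunenSeq (metaProgram D) n (MAtom.strict R X Ys) = some false) :
    ¬ MatchStrict D R X Ys := by
  intro hm
  cases n with
  | zero => simp [kunenSeq] at h
  | succ n =>
    rw [strict_eval_true hm] at h
    simp at h

end Kunen
section Main

variable {D : DTheory} {p : Lit}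

lemma kunen_sound : ∀ n (p : Lit),
    (kunenSeq (metaProgram D) n (MAtom.definitely p) = some true → ∃ m, PDn D m p) ∧
    (kunenSeq (metaProgram D) n (MAtom.definitely p) = some false → ∃ m, MDn D m p) := by
  intro n
  induction n with
  | zero => intro p; constructor <;> intro h <;> simp [kunenSeq] at h
  | succ n ih =>
    intro p
    constructor
    · intro h
      rw [kunenSeq_succ] at h
      obtain ⟨c, hc, hh, hb⟩ := kunenStep_true_elim h
      rcases mem_metaProgram_definitely hc hh with rfl | ⟨R, Ys, rfl⟩
      · have hft := hb.1 (MAtom.fact p) (by simp)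
        exact ⟨1, Or.inl (fact_true_sound hft)⟩
      · have hs := hb.1 (MAtom.strict R p Ys) (by simp)
        obtain ⟨r, hr, hk, hn', hh', ha'⟩ := strict_true_sound hs
        have hants : ∀ a ∈ Ys, ∃ m, PDn D m a := by
          intro a ha
          have := hb.1 (MAtom.definitely a)
            (List.mem_cons_of_mem _ (List.mem_map_of_mem ha))
          exact (ih a).1 this
        obtain ⟨N, hN⟩ := list_level (R := fun a n => PDn D n a)
          (fun a m k hmk => PDn_le hmk) hants
        refine ⟨N + 1, Or.inr ⟨r, hr, hk, hh', ?_⟩⟩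
        rw [ha']
        exact hN
    · intro h
      rw [kunenSeq_succ] at h
      have hall := kunenStep_false_elim h
      have hfact := hall ⟨MAtom.definitely p, [MAtom.fact p], []⟩ (defFactClause_mem p) rfl
      have hpf : kunenSeq (metaProgram D) n (MAtom.fact p) = some false := by
        rcases hfact with ⟨a, ha, hv⟩ | ⟨a, ha, hv⟩
        · simp only [List.mem_singleton] at ha
          subst ha
          exact hv
        · simp at ha
      have hnf : p ∉ D.facts := fact_false_sound hpf
      have hrules : ∀ r ∈ D.rules, ∃ N,
          (r.kind = RuleKind.strict → r.head = p → ∃ a ∈ r.ante, MDn D N a) := by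
        intro r hrr
        by_cases hks : r.kind = RuleKind.strict ∧ r.head = p
        · have hcl := hall ⟨MAtom.definitely p,
              MAtom.strict r.name p r.ante :: r.ante.map MAtom.definitely, []⟩
            (defStrictClause_mem r.name p r.ante) rfl
          rcases hcl with ⟨a, ha, hv⟩ | ⟨a, ha, hv⟩
          · rcases List.mem_cons.1 ha with rfl | ha
            · exact absurd ⟨r, hrr, hks.1, rfl, hks.2, rfl⟩ (strict_false_sound hv)
            · obtain ⟨y, hy, rfl⟩ := List.mem_map.1 ha
              obtain ⟨m, hm⟩ := (ih y).2 hv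
              exact ⟨m, fun _ _ => ⟨y, hy, hm⟩⟩
          · simp at ha
        · exact ⟨0, fun h1 h2 => absurd ⟨h1, h2⟩ hks⟩
      have mono : ∀ (r : DLRule) (m k : ℕ), m ≤ k →
          (r.kind = RuleKind.strict → r.head = p → ∃ a ∈ r.ante, MDn D m a) →
          (r.kind = RuleKind.strict → r.head = p → ∃ a ∈ r.ante, MDn D k a) := by
        intro r m k hmk hv' h1 h2
        obtain ⟨a, ha, hm⟩ := hv' h1 h2
        exact ⟨a, ha, MDn_le hmk hm⟩
      obtain ⟨N, hN⟩ := finset_level mono hrules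
      exact ⟨N + 1, hnf, fun r hrr hk hh => hN r hrr hk hh⟩

lemma pdn_kunen : ∀ n (p : Lit), PDn D n p →
    ∃ m, kunenSeq (metaProgram D) m (MAtom.definitely p) = some true := by
  intro n
  induction n with
  | zero => intro p h; exact h.elim
  | succ n ih =>
    intro p h
    rcases h with hp | ⟨r, hr, hk, hh, ha⟩
    · refine ⟨(0+1)+1, ?_⟩
      rw [kunenSeq_succ]
      apply kunenStep_true
      refine ⟨⟨MAtom.definitely p, [MAtom.fact p], []⟩, defFactClause_mem p, rfl, ?_, by simp⟩
      intro a ha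
      simp only [List.mem_singleton] at ha
      subst ha
      rw [fact_eval, if_pos hp]
    · have hants : ∀ a ∈ r.ante, ∃ m,
          kunenSeq (metaProgram D) m (MAtom.definitely a) = some true :=
        fun a ha' => ih a (ha a ha')
      obtain ⟨N, hN⟩ := list_level
        (R := fun a m => kunenSeq (metaProgram D) m (MAtom.definitely a) = some true)
        (fun a m k hmk hv => kunenSeq_le hmk _ _ hv) hants
      refine ⟨(N+1)+1, ?_⟩
      rw [kunenSeq_succ]
      apply kunenStep_true
      refine ⟨⟨MAtom.definitely p, MAtom.strict r.name p r.ante :: r.ante.map MAtom.definitely, []⟩,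
        defStrictClause_mem _ _ _, rfl, ?_, by simp⟩
      intro a hmem
      rcases List.mem_cons.1 hmem with rfl | hmem
      · exact strict_eval_true ⟨r, hr, hk, rfl, hh, rfl⟩ N
      · obtain ⟨y, hy, rfl⟩ := List.mem_map.1 hmem
        exact kunenSeq_le (Nat.le_succ N) _ _ (hN y hy)

lemma mdn_kunen : ∀ n (p : Lit), MDn D n p →
    ∃ m, kunenSeq (metaProgram D) m (MAtom.definitely p) = some false := by
  intro n
  induction n with
  | zero => intro p h; exact h.elim
  | succ n ih =>
    rintro p ⟨hnf, hr⟩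
    have hrules : ∀ r ∈ D.rules, ∃ N,
        (r.kind = RuleKind.strict → r.head = p →
          ∃ a ∈ r.ante, kunenSeq (metaProgram D) N (MAtom.definitely a) = some false) := by
      intro r hrr
      by_cases hks : r.kind = RuleKind.strict ∧ r.head = p
      · obtain ⟨a, ha, hm⟩ := hr r hrr hks.1 hks.2
        obtain ⟨m, hm'⟩ := ih a hm
        exact ⟨m, fun _ _ => ⟨a, ha, hm'⟩⟩
      · exact ⟨0, fun h1 h2 => absurd ⟨h1, h2⟩ hks⟩
    have mono : ∀ (r : DLRule) (m k : ℕ), m ≤ k →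
        (r.kind = RuleKind.strict → r.head = p →
          ∃ a ∈ r.ante, kunenSeq (metaProgram D) m (MAtom.definitely a) = some false) →
        (r.kind = RuleKind.strict → r.head = p →
          ∃ a ∈ r.ante, kunenSeq (metaProgram D) k (MAtom.definitely a) = some false) := by
      intro r m k hmk hv' h1 h2
      obtain ⟨a, ha, hm⟩ := hv' h1 h2
      exact ⟨a, ha, kunenSeq_le hmk _ _ hm⟩
    obtain ⟨N, hN⟩ := finset_level mono hrules
    refine ⟨(N+1)+1, ?_⟩
    rw [kunenSeq_succ]
    apply kunenStep_false
    intro c hc hh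
    rcases mem_metaProgram_definitely hc hh with rfl | ⟨R, Ys, rfl⟩
    · refine Or.inl ⟨MAtom.fact p, by simp, ?_⟩
      rw [fact_eval, if_neg hnf]
    · by_cases hm : MatchStrict D R p Ys
      · obtain ⟨r, hrr, hk, hn', hh', ha'⟩ := hm
        obtain ⟨a, ha, hv⟩ := hN r hrr hk hh'
        refine Or.inl ⟨MAtom.definitely a, ?_, kunenSeq_le (Nat.le_succ N) _ _ hv⟩
        exact List.mem_cons_of_mem _ (List.mem_map_of_mem (ha' ▸ ha))
      · exact Or.inl ⟨MAtom.strict R p Ys, by simp, strict_eval_false hm N⟩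

end Main

/-- Theorem 8 (a),(b): `D ⊢ +Δp` iff `M ⊨_K definitely(p)`,
and `D ⊢ -Δp` iff `M ⊨_K ¬definitely(p)` under the Kunen semantics. -/
theorem kunen_definitely (D : DTheory) (p : Lit) :
    (PDelta D p ↔ kunenSupports (metaProgram D) (MAtom.definitely p)) ∧
    (MDelta D p ↔ kunenSupportsNot (metaProgram D) (MAtom.definitely p)) := by
  constructor
  · constructor
    · intro h
      obtain ⟨n, hn⟩ := pdelta_iff_pdn.1 h
      exact pdn_kunen n p hn
    · rintro ⟨m, hm⟩
      exact pdelta_iff_pdn.2 ((kunen_sound m p).1 hm)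
  · constructor
    · intro h
      obtain ⟨n, hn⟩ := mdelta_iff_mdn.1 h
      exact mdn_kunen n p hn
    · rintro ⟨m, hm⟩
      exact mdelta_iff_mdn.2 ((kunen_sound m p).2 hm)
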